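/- Let n ≥ 0, let η be the Lorentzian bilinear form on ℝ^{n+2} described in the context, let 𝔤 ⊆ so(1,n+1)_{ℝU} be a Lie subalgebra, and let R ∈ 𝓡(𝔤). Then η(R(U,V)x, y) = 0 for all x, y ∈ span{X_1, …, X_n}; that is, the so(n)-block of R(U,V) vanishes. -/

import Mathlib

def mid (n : ℕ) (i : Fin n) : Fin (n + 2) := ⟨(i : ℕ) + 1, by omega⟩

def lastIdx (n : ℕ) : Fin (n + 2) := ⟨n + 1, by omega⟩

/-- The Lorentzian bilinear form on `ℝ^{n+2}` with Gram matrix `[[0,0,1],[0,E_n,0],[1,0,0]]`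
in the basis `U = e_0, X_1 = e_1, …, X_n = e_n, V = e_{n+1}`. -/
def eta (n : ℕ) (x y : Fin (n + 2) → ℝ) : ℝ :=
  x 0 * y (lastIdx n) + x (lastIdx n) * y 0 + ∑ i : Fin n, x (mid n i) * y (mid n i)


/-- The vector `U = e_0`. -/
def Uvec (n : ℕ) : Fin (n + 2) → ℝ := Pi.single 0 1

/-- The vector `V = e_{n+1}`. -/
def Vvec (n : ℕ) : Fin (n + 2) → ℝ := Pi.single (lastIdx n) 1

/-- The set of basis vectors `X_1 = e_1, …, X_n = e_n`. -/
def Xset (n : ℕ) : Set (Fin (n + 2) → ℝ) := Set.range fun i : Fin n => Pi.single (mid n i) 1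

attribute [local instance] LieRing.ofAssociativeRing


lemma eta_comm (n : ℕ) (x y : Fin (n + 2) → ℝ) : eta n x y = eta n y x := by
  unfold eta
  rw [Finset.sum_congr rfl fun i _ => mul_comm (x (mid n i)) (y (mid n i))]
  ring

lemma eta_add_left (n : ℕ) (x x' y : Fin (n + 2) → ℝ) :
    eta n (x + x') y = eta n x y + eta n x' y := by
  simp [eta, add_mul, Finset.sum_add_distrib]; ring

lemma eta_smul_left (n : ℕ) (c : ℝ) (x y : Fin (n + 2) → ℝ) :
    eta n (c • x) y = c * eta n x y := by
  simp [eta, mul_assoc, ← Finset.mul_sum]; ring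

lemma eta_neg_left (n : ℕ) (x y : Fin (n + 2) → ℝ) :
    eta n (-x) y = - eta n x y := by
  have := eta_smul_left n (-1) x y
  simpa using this

lemma eta_zero_left (n : ℕ) (y : Fin (n + 2) → ℝ) : eta n 0 y = 0 := by simp [eta]

lemma eta_VU (n : ℕ) : eta n (Vvec n) (Uvec n) = 1 := by
  simp [eta, Vvec, Uvec, lastIdx, mid, Pi.single_apply, Fin.ext_iff]

lemma eta_U_gen (n : ℕ) (i : Fin n) : eta n (Uvec n) (Pi.single (mid n i) 1) = 0 := by
  simp [eta, Uvec, lastIdx, mid, Pi.single_apply, Fin.ext_iff]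
  omega

/-- a curvature tensor `R ∈ 𝓡(𝔤)` for `𝔤 ⊆ so(1,n+1)_{ℝU}` satisfies
`η(R(U,V)x, y) = 0` for all `x, y ∈ span{X_1, …, X_n}`: the `so(n)`-block of `R(U,V)`
vanishes. -/
theorem statement13 (n : ℕ)
    (𝔤 : LieSubalgebra ℝ (Module.End ℝ (Fin (n + 2) → ℝ)))
    (h𝔤 : ∀ M ∈ 𝔤, (∀ x y, eta n (M x) y + eta n x (M y) = 0) ∧
      (∀ v ∈ Submodule.span ℝ {Uvec n}, M v ∈ Submodule.span ℝ {Uvec n}))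
    (R : (Fin (n + 2) → ℝ) →ₗ[ℝ] (Fin (n + 2) → ℝ) →ₗ[ℝ] Module.End ℝ (Fin (n + 2) → ℝ))
    (hRval : ∀ u v, R u v ∈ 𝔤)
    (hRanti : ∀ u v, R u v = -R v u)
    (hRBianchi : ∀ u v w, R u v w + R v w u + R w u v = 0) :
    ∀ x ∈ Submodule.span ℝ (Xset n), ∀ y ∈ Submodule.span ℝ (Xset n),
      eta n (R (Uvec n) (Vvec n) x) y = 0 := by
  -- skew-symmetry of each R u v with respect to eta
  have hskew : ∀ u v a b, eta n (R u v a) b = - eta n a (R u v b) := by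
    intro u v a b
    have := (h𝔤 _ (hRval u v)).1 a b
    linarith
  -- each R u v fixes the line through U
  have hUfix : ∀ u v, ∃ c : ℝ, R u v (Uvec n) = c • Uvec n := by
    intro u v
    have h := (h𝔤 _ (hRval u v)).2 (Uvec n) (Submodule.mem_span_singleton_self _)
    rw [Submodule.mem_span_singleton] at h
    obtain ⟨c, hc⟩ := h
    exact ⟨c, hc.symm⟩
  -- eta (R u v U) z = 0 whenever eta U z = 0
  have hRU : ∀ u v z, eta n (Uvec n) z = 0 → eta n (R u v (Uvec n)) z = 0 := by
    intro u v z hz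
    obtain ⟨c, hc⟩ := hUfix u v
    rw [hc, eta_smul_left, hz, mul_zero]
  -- key computation for vectors orthogonal to U
  have key : ∀ x y, eta n (Uvec n) x = 0 → eta n (Uvec n) y = 0 →
      eta n (R (Uvec n) (Vvec n) x) y = 0 := by
    intro x y hUx hUy
    set U := Uvec n with hU
    set V := Vvec n with hV
    set a := eta n (R U V x) y with ha
    -- eta (R y x V) U = 0
    have h1 : eta n (R y x V) U = 0 := by
      have hB := congrArg (fun z => eta n z U) (hRBianchi y x V)
      simp only [eta_add_left, eta_zero_left] at hB
      have e1 : eta n (R x V y) U = 0 := by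
        rw [hskew, eta_comm, hRU x V y hUy]; ring
      have e2 : eta n (R V y x) U = 0 := by
        rw [hskew, eta_comm, hRU V y x hUx]; ring
      linarith
    -- eta V (R y x U) = 0
    have h2 : eta n V (R y x U) = 0 := by
      have := hskew y x V U
      rw [h1] at this
      linarith
    -- eta (R V U y) x = a
    have h3 : eta n (R V U y) x = a := by
      have hne : R V U y = -(R U V y) := by
        rw [hRanti U V]; simp
      rw [hne, eta_neg_left, hskew, eta_comm, ← ha]
      ring
    -- eta (R U y V) x = -a
    have h4 : eta n (R U y V) x = -a := by
      have hB := congrArg (fun z => eta n z x) (hRBianchi U y V)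
      simp only [eta_add_left, eta_zero_left] at hB
      have e1 : eta n (R y V U) x = 0 := hRU y V x hUx
      linarith
    -- eta V (R U y x) = a
    have h5 : eta n V (R U y x) = a := by
      have := hskew U y V x
      rw [h4] at this
      linarith
    -- eta V (R x U y) = -a
    have h6 : eta n V (R x U y) = -a := by
      have hB := congrArg (fun z => eta n (Vvec n) z) (hRBianchi x U y)
      have expand : eta n V (R x U y + R U y x + R y x U)
          = eta n V (R x U y) + eta n V (R U y x) + eta n V (R y x U) := by
        rw [eta_comm, eta_add_left, eta_add_left, eta_comm n (R x U y),
          eta_comm n (R U y x), eta_comm n (R y x U)]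
      have hz : eta n V (0 : Fin (n + 2) → ℝ) = 0 := by
        rw [eta_comm]; exact eta_zero_left n V
      rw [hB] at expand
      rw [hz] at expand
      linarith
    -- eta (R x U V) y = a
    have h7 : eta n (R x U V) y = a := by
      have := hskew x U V y
      rw [h6] at this
      linarith
    -- final Bianchi
    have hB := congrArg (fun z => eta n z y) (hRBianchi U V x)
    simp only [eta_add_left, eta_zero_left] at hB
    have e1 : eta n (R V x U) y = 0 := hRU V x y hUy
    linarith
  -- extend to spans by bilinearity
  intro x hx y hy
  induction hx using Submodule.span_induction with
  | mem x hxm =>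
    induction hy using Submodule.span_induction with
    | mem y hym =>
      obtain ⟨i, rfl⟩ := hxm
      obtain ⟨j, rfl⟩ := hym
      exact key _ _ (eta_U_gen n i) (eta_U_gen n j)
    | zero => rw [eta_comm]; exact eta_zero_left n _
    | add b c _ _ hb hc =>
      rw [eta_comm, eta_add_left, eta_comm n b, eta_comm n c, hb, hc]; ring
    | smul c b _ hb =>
      rw [eta_comm, eta_smul_left, eta_comm n b, hb]; ring
  | zero => simp only [map_zero, LinearMap.zero_apply]; exact eta_zero_left n _
  | add b c _ _ hb hc =>
    simp only [map_add, LinearMap.add_apply]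
    rw [eta_add_left, hb, hc]; ring
  | smul c b _ hb =>
    simp only [map_smul, LinearMap.smul_apply]
    rw [eta_smul_left, hb]; ring
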